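/- For every E ⊂ ℝ^N (not necessarily measurable) and every m ∈ [N, +∞), the set E^(m) of m-density points of E is Lebesgue measurable. -/
import Mathlib

open MeasureTheory Filter Asymptotics Metric Topology
open Set

noncomputable section

abbrev Euc (M : ℕ) := EuclideanSpace ℝ (Fin M)

/-- `x` is an `m`-density point of `E ⊆ ℝ^N`:
`𝓛^N(B_r(x) \ E) = o(r^m)` as `r → 0+`. -/
def IsDensityPt {N : ℕ} (m : ℝ) (E : Set (Euc N)) (x : Euc N) : Prop :=
  (fun r : ℝ => (volume (ball x r \ E)).toReal) =o[𝓝[>] (0:ℝ)] fun r : ℝ => r ^ m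

lemma meas_aux {N : ℕ} (F : Set (Euc N)) (hF : MeasurableSet F) (q : ℝ) :
    Measurable fun x : Euc N => volume (ball x q \ F) := by
  have hS : MeasurableSet {p : Euc N × Euc N | dist p.2 p.1 < q ∧ p.2 ∉ F} := by
    apply MeasurableSet.inter
    · exact measurableSet_lt (measurable_snd.dist measurable_fst) measurable_const
    · exact measurable_snd hF.compl
  have hset : ∀ x : Euc N,
      ball x q \ F = Prod.mk x ⁻¹' {p : Euc N × Euc N | dist p.2 p.1 < q ∧ p.2 ∉ F} := by
    intro x; ext y; simp [Set.mem_diff, mem_ball]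
  simp only [hset]
  exact measurable_measure_prodMk_left hS

/-- For every `E ⊆ ℝ^N` (not necessarily measurable) and every `m ≥ N`, the set of
`m`-density points of `E` is Lebesgue measurable. -/
theorem measurableSet_density_points {N : ℕ} (E : Set (Euc N)) (m : ℝ) (hm : (N : ℝ) ≤ m) :
    MeasurableSet {x : Euc N | IsDensityPt m E x} := by
  have hm0 : (0:ℝ) ≤ m := le_trans (Nat.cast_nonneg N) hm
  set F : Set (Euc N) := (toMeasurable volume Eᶜ)ᶜ with hFdef
  have hF : MeasurableSet F := (measurableSet_toMeasurable _ _).compl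
  -- replace E by the measurable set F
  have hvol : ∀ (x : Euc N) (r : ℝ), volume (ball x r \ E) = volume (ball x r \ F) := by
    intro x r
    have h1 : ball x r \ E = Eᶜ ∩ ball x r := by rw [Set.diff_eq, Set.inter_comm]
    have h2 : ball x r \ F = toMeasurable volume Eᶜ ∩ ball x r := by
      rw [Set.diff_eq, hFdef, compl_compl, Set.inter_comm]
    rw [h1, h2, Measure.measure_toMeasurable_inter_of_sFinite measurableSet_ball]
  have hEq : {x : Euc N | IsDensityPt m E x} = {x : Euc N | IsDensityPt m F x} := by
    ext x
    simp only [Set.mem_setOf_eq, IsDensityPt]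
    constructor <;> intro h <;> [skip; skip] <;>
      · refine h.congr' (Eventually.of_forall fun r => ?_) (Eventually.of_forall fun r => rfl)
        simp only [hvol]
  rw [hEq]
  -- now F is measurable
  have key : {x : Euc N | IsDensityPt m F x} =
      ⋂ n : ℕ, ⋃ k : ℕ, ⋂ q : ℚ, ⋂ _ : 0 < (q:ℝ) ∧ (q:ℝ) < 1/(k+1),
        {x : Euc N | volume (ball x (q:ℝ) \ F) ≤ ENNReal.ofReal ((q:ℝ)^m / (n+1))} := by
    ext x
    simp only [Set.mem_setOf_eq, Set.mem_iInter, Set.mem_iUnion]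
    constructor
    · intro h n
      have hc : (0:ℝ) < 1/(n+1) := by positivity
      have := (isLittleO_iff.mp h) hc
      rw [eventually_iff, mem_nhdsGT_iff_exists_Ioo_subset] at this
      obtain ⟨u, hu, hsub⟩ := this
      obtain ⟨k, hk⟩ := exists_nat_one_div_lt (show (0:ℝ) < u from hu)
      refine ⟨k, ?_⟩
      intro q hq
      have hq1 : (q:ℝ) ∈ Set.Ioo (0:ℝ) u := ⟨hq.1, lt_trans hq.2 hk⟩
      have hb := hsub hq1
      simp only [Set.mem_setOf_eq, Real.norm_eq_abs] at hb
      have hqm : (0:ℝ) < (q:ℝ)^m := Real.rpow_pos_of_pos hq.1 m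
      have hb2 : (volume (ball x (q:ℝ) \ F)).toReal ≤ (q:ℝ)^m / (n+1) := by
        calc (volume (ball x (q:ℝ) \ F)).toReal
            ≤ |(volume (ball x (q:ℝ) \ F)).toReal| := le_abs_self _
          _ ≤ 1/(n+1) * |(q:ℝ)^m| := hb
          _ = (q:ℝ)^m / (n+1) := by rw [abs_of_pos hqm]; ring
      rw [ENNReal.le_ofReal_iff_toReal_le (((measure_mono Set.diff_subset).trans_lt measure_ball_lt_top).ne) (by positivity)]
      exact hb2
    · intro h
      rw [IsDensityPt, isLittleO_iff]
      intro c hc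
      obtain ⟨n, hn⟩ := exists_nat_one_div_lt hc
      obtain ⟨k, hk⟩ := h n
      have hmem : Set.Ioo (0:ℝ) (1/(k+1)) ∈ 𝓝[>] (0:ℝ) :=
        Ioo_mem_nhdsGT_of_mem ⟨le_refl 0, by positivity⟩
      filter_upwards [hmem] with r hr
      -- show the bound at real r using rationals below r
      have hr0 : (0:ℝ) < r := hr.1
      have hbound : volume (ball x r \ F) ≤ ENNReal.ofReal (r^m / (n+1)) := by
        have hball : ball x r \ F =
            ⋃ q : {q : ℚ // 0 < (q:ℝ) ∧ (q:ℝ) < r}, (ball x (q:ℝ) \ F) := by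
          ext y
          simp only [Set.mem_diff, Set.mem_iUnion, mem_ball]
          constructor
          · rintro ⟨hy, hyF⟩
            obtain ⟨q, hq1, hq2⟩ := exists_rat_btwn hy
            exact ⟨⟨q, lt_of_le_of_lt dist_nonneg hq1, hq2⟩, hq1, hyF⟩
          · rintro ⟨q, hq, hyF⟩
            exact ⟨lt_trans hq q.2.2, hyF⟩
        have hdir : Directed (· ⊆ ·)
            fun q : {q : ℚ // 0 < (q:ℝ) ∧ (q:ℝ) < r} => ball x (q:ℝ) \ F := by
          intro a b
          rcases le_total (a:ℚ) (b:ℚ) with hab | hab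
          · exact ⟨b, Set.diff_subset_diff_left (ball_subset_ball (by exact_mod_cast hab)),
              subset_refl _⟩
          · exact ⟨a, subset_refl _,
              Set.diff_subset_diff_left (ball_subset_ball (by exact_mod_cast hab))⟩
        rw [hball, hdir.measure_iUnion]
        refine iSup_le fun q => ?_
        have hq' : (0:ℝ) < (q:ℚ) ∧ ((q:ℚ):ℝ) < 1/(k+1) := ⟨q.2.1, lt_trans q.2.2 hr.2⟩
        have := hk q hq'
        refine le_trans this (ENNReal.ofReal_le_ofReal ?_)
        have : ((q:ℚ):ℝ)^m ≤ r^m :=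
          Real.rpow_le_rpow (le_of_lt q.2.1) (le_of_lt q.2.2) hm0
        gcongr
      have hrm : (0:ℝ) < r^m := Real.rpow_pos_of_pos hr0 m
      have := ENNReal.toReal_le_of_le_ofReal (by positivity) hbound
      calc ‖(volume (ball x r \ F)).toReal‖
          = (volume (ball x r \ F)).toReal := by
            rw [Real.norm_eq_abs, abs_of_nonneg ENNReal.toReal_nonneg]
        _ ≤ r^m / (n+1) := this
        _ ≤ c * ‖r^m‖ := by
            rw [Real.norm_eq_abs, abs_of_pos hrm, div_eq_inv_mul, ← one_div]
            exact mul_le_mul_of_nonneg_right hn.le hrm.le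
  rw [key]
  refine MeasurableSet.iInter fun n => MeasurableSet.iUnion fun k =>
    MeasurableSet.iInter fun q => MeasurableSet.iInter fun _ => ?_
  exact (meas_aux F hF q) measurableSet_Iic
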